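/- arXiv:2305.07645 — 2 statements merged into one kernel-verified Lean document; each statement's English description precedes it below -/
import Mathlib

section
/- Local complementation preserves connected components: for any simple graph G and vertex a, two vertices lie in the same connected component of G if and only if they lie in the same connected component of τ_a(G). -/
/-!
Every edge of `G` is joined in `lc G x` by a path of length at most two: it survives unless both
ends are neighbours of `x`, in which case it is replaced by the path through `x` (the edges at `x`
are never touched). Hence reachability in `G` implies reachability in `lc G x`, and the converse
follows because local complementation at `x` is an involution.
-/

namespace Foliage

variable {V : Type*}

def lc (G : SimpleGraph V) (x : V) : SimpleGraph V where
  Adj v w := v ≠ w ∧ ¬ (G.Adj v w ↔ G.Adj x v ∧ G.Adj x w)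
  symm := ⟨by
    intro v w h
    refine ⟨h.1.symm, fun hiff => h.2 ?_⟩
    constructor
    · intro hvw; exact (hiff.mp (G.adj_symm hvw)).symm
    · intro hx; exact G.adj_symm (hiff.mpr hx.symm)⟩
  loopless := ⟨fun v h => h.1 rfl⟩

theorem _root_.SimpleGraph.reachable_le_of_adj_le_reachable {G H : SimpleGraph V}
    (h : G.Adj ≤ H.Reachable) : G.Reachable ≤ H.Reachable := by
  rw [SimpleGraph.reachable_eq_reflTransGen (G := G)]
  exact Relation.reflTransGen_le_of_equivalence_of_le H.reachable_is_equivalence h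

@[simp]
theorem lc_adj_center (G : SimpleGraph V) (x v : V) : (lc G x).Adj x v ↔ G.Adj x v :=
  ⟨fun h => by simpa [h.1] using h.2, fun h => ⟨h.ne, by simp [h]⟩⟩

@[simp]
theorem lc_lc (G : SimpleGraph V) (x : V) : lc (lc G x) x = G := by
  ext v w
  change v ≠ w ∧ ¬((lc G x).Adj v w ↔ (lc G x).Adj x v ∧ (lc G x).Adj x w) ↔ G.Adj v w
  rw [lc_adj_center, lc_adj_center]
  change v ≠ w ∧ ¬((v ≠ w ∧ ¬(G.Adj v w ↔ _)) ↔ _) ↔ _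
  constructor
  · rintro ⟨hvw, h⟩
    tauto
  · intro h
    have hvw := h.ne
    exact ⟨hvw, by tauto⟩

theorem reachable_lc_of_adj {G : SimpleGraph V} {v w : V} (x : V) (h : G.Adj v w) :
    (lc G x).Reachable v w := by
  by_cases hx : G.Adj x v ∧ G.Adj x w
  · have hxv : (lc G x).Adj x v := (lc_adj_center G x v).2 hx.1
    have hxw : (lc G x).Adj x w := (lc_adj_center G x w).2 hx.2
    exact hxv.symm.reachable.trans hxw.reachable
  · exact SimpleGraph.Adj.reachable ⟨h.ne, fun hiff => hx (hiff.mp h)⟩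

theorem reachable_le_reachable_lc (G : SimpleGraph V) (x : V) :
    G.Reachable ≤ (lc G x).Reachable :=
  SimpleGraph.reachable_le_of_adj_le_reachable fun _ _ => reachable_lc_of_adj x

/-- Local complementation preserves connected components. -/
theorem lc_preserves_reachable (G : SimpleGraph V) (x : V) (v w : V) :
    G.Reachable v w ↔ (lc G x).Reachable v w := by
  refine ⟨reachable_le_reachable_lc G x v w, fun h => ?_⟩
  simpa using reachable_le_reachable_lc (lc G x) x v w h

end Foliage
end

section
/- For every non-decreasing integer partition n_1 ≤ ... ≤ n_k of n with k ≥ 5, there exists a simple graph on n vertices whose foliage partition has classes of sizes exactly n_1, ..., n_k. (Construction: take k disjoint stars, the i-th with n_i vertices, and connect their centers in a cycle.) -/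
/-!
A leaf has its star's centre as only neighbour, so outside of `{v, w}` its adjacency row
vanishes; hence a leaf is in relation with its centre, and two leaves of one star have equal
rows. Vertices `v`, `w` of different stars are separated as soon as `v` has a neighbour `u₁`
that is neither `w` nor adjacent to `w`, and `w` has some neighbour `u₂ ≠ v`: then
`a_{v,u₁} a_{w,u₂} = 1` while `a_{w,u₁} = 0`. On a cycle of length at least five, the two
neighbours of a vertex `i` never both lie in the closed neighbourhood of another vertex `j`,
which provides such a `u₁` among the centres.
-/

namespace Foliage

variable {V : Type*}

open Classical in
noncomputable def adjNum (G : SimpleGraph V) (v u : V) : ℕ :=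
  if G.Adj v u then 1 else 0

def Rel (G : SimpleGraph V) (v w : V) : Prop :=
  G.Reachable v w ∧
    ∀ u₁ u₂ : V, u₁ ≠ v → u₁ ≠ w → u₂ ≠ v → u₂ ≠ w →
      adjNum G v u₁ * adjNum G w u₂ = adjNum G v u₂ * adjNum G w u₁

open SimpleGraph

section Rel

variable {G : SimpleGraph V} {v w : V}

theorem Rel.symm (h : Rel G v w) : Rel G w v :=
  ⟨h.1.symm, fun u₁ u₂ h₁v h₁w h₂v h₂w => by
    rw [mul_comm, h.2 u₂ u₁ h₂w h₂v h₁w h₁v, mul_comm]⟩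

open Classical in
theorem adjNum_eq_of_iff {W : Type*} {G' : SimpleGraph W} {u : V} {v' u' : W}
    (h : G.Adj v u ↔ G'.Adj v' u') : adjNum G v u = adjNum G' v' u' :=
  if_congr h rfl rfl

theorem rel_of_forall_adj_iff (hvw : G.Reachable v w)
    (h : ∀ u, u ≠ v → u ≠ w → (G.Adj v u ↔ G.Adj w u)) : Rel G v w :=
  ⟨hvw, fun u₁ u₂ h₁v h₁w h₂v h₂w => by
    rw [adjNum_eq_of_iff (h u₁ h₁v h₁w), adjNum_eq_of_iff (h u₂ h₂v h₂w), mul_comm]⟩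

theorem rel_of_forall_adj_eq (hvw : G.Reachable v w) (h : ∀ u, G.Adj w u → u = v) :
    Rel G v w := by
  have hw : ∀ u, u ≠ v → adjNum G w u = 0 := fun u hu => if_neg (mt (h u) hu)
  exact ⟨hvw, fun u₁ u₂ h₁v _ h₂v _ => by rw [hw u₁ h₁v, hw u₂ h₂v, mul_zero, mul_zero]⟩

theorem not_rel_of_private_neighbor {u₁ u₂ : V} (h₁ : G.Adj v u₁) (h₁w : ¬G.Adj w u₁)
    (hu₁ : u₁ ≠ w) (h₂ : G.Adj w u₂) (hu₂ : u₂ ≠ v) : ¬Rel G v w := fun h => by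
  have := h.2 u₁ u₂ h₁.ne.symm hu₁ hu₂ h₂.ne.symm
  simp [adjNum, h₁, h₁w, h₂] at this

theorem rel_iso_iff {W : Type*} {G' : SimpleGraph W} (φ : G ≃g G') :
    Rel G' (φ v) (φ w) ↔ Rel G v w := by
  simp only [Rel, φ.reachable_iff, φ.surjective.forall, φ.injective.ne_iff,
    adjNum_eq_of_iff φ.map_adj_iff]

end Rel

def HasPrivateNeighbors {ι : Type*} (H : SimpleGraph ι) : Prop :=
  ∀ ⦃i j⦄, i ≠ j → ∃ t, H.Adj i t ∧ ¬H.Adj j t ∧ t ≠ j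

theorem cycleGraph_adj_iff_val {k : ℕ} (hk : 2 ≤ k) {i j : Fin k} :
    (cycleGraph k).Adj i j ↔ i.val = j.val + 1 ∨ j.val = i.val + 1 ∨
      (i.val = 0 ∧ j.val + 1 = k) ∨ (j.val = 0 ∧ i.val + 1 = k) := by
  have := i.isLt
  have := j.isLt
  rw [cycleGraph_adj']
  rcases lt_trichotomy i j with h | rfl | h
  · rw [Fin.coe_sub_iff_lt.2 h, Fin.coe_sub_iff_le.2 h.le]
    have := Fin.lt_def.1 h
    omega
  · rw [Fin.coe_sub_iff_le.2 le_rfl]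
    omega
  · rw [Fin.coe_sub_iff_le.2 h.le, Fin.coe_sub_iff_lt.2 h]
    have := Fin.lt_def.1 h
    omega

theorem cycleGraph_hasPrivateNeighbors {k : ℕ} (hk : 5 ≤ k) :
    HasPrivateNeighbors (cycleGraph k) := by
  intro i j hij
  have hi := i.isLt
  have hj := j.isLt
  have hij' := Fin.val_ne_of_ne hij
  obtain ⟨s, hs⟩ : ∃ s : Fin k, s.val = i.val + 1 ∨ (s.val = 0 ∧ i.val + 1 = k) :=
    ⟨⟨if i.val + 1 = k then 0 else i.val + 1, by split_ifs <;> omega⟩, by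
      dsimp only; split_ifs <;> omega⟩
  obtain ⟨p, hp⟩ : ∃ p : Fin k, p.val + 1 = i.val ∨ (i.val = 0 ∧ p.val + 1 = k) :=
    ⟨⟨if i.val = 0 then k - 1 else i.val - 1, by split_ifs <;> omega⟩, by
      dsimp only; split_ifs <;> omega⟩
  -- `s` and `p` are the neighbours `i ± 1`; they cannot both be in the closed neighbourhood of `j`.
  by_contra! h
  simp only [cycleGraph_adj_iff_val (by omega : 2 ≤ k), Fin.ext_iff] at h
  have h₁ := h s (by omega)
  have h₂ := h p (by omega)
  simp only [imp_iff_not_or, not_not] at h₁ h₂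
  omega

section WithLeaves

variable {ι : Type*} (H : SimpleGraph ι) (m : ι → ℕ) [∀ i, NeZero (m i)]

/-- `⟨i, 0⟩` is the vertex `i` of `H`, and the `⟨i, a⟩` with `a ≠ 0` are the `m i - 1` leaves
hung on it. -/
def withLeaves : SimpleGraph (Σ i, Fin (m i)) where
  Adj x y := (x.2 = 0 ∧ y.2 = 0 ∧ H.Adj x.1 y.1) ∨ (x.1 = y.1 ∧ (x.2 = 0 ↔ y.2 ≠ 0))
  symm := ⟨fun x y => by
    rintro (⟨hx, hy, h⟩ | ⟨h, hxy⟩)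
    · exact Or.inl ⟨hy, hx, h.symm⟩
    · exact Or.inr ⟨h.symm, by tauto⟩⟩
  loopless := ⟨fun x => by
    rintro (⟨-, -, h⟩ | ⟨-, h⟩)
    · exact H.loopless.irrefl _ h
    · tauto⟩

variable {H m}

theorem withLeaves_adj_mk_zero {i j : ι} :
    (withLeaves H m).Adj ⟨i, 0⟩ ⟨j, 0⟩ ↔ H.Adj i j := by
  simp [withLeaves]

theorem withLeaves_adj_of_ne_zero {x y : Σ i, Fin (m i)} (hx : x.2 ≠ 0) :
    (withLeaves H m).Adj x y ↔ y = ⟨x.1, 0⟩ := by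
  obtain ⟨i, a⟩ := x
  obtain ⟨j, b⟩ := y
  simp only [withLeaves, Sigma.mk.inj_iff] at hx ⊢
  constructor
  · rintro (⟨ha, -⟩ | ⟨rfl, h⟩)
    · exact absurd ha hx
    · exact ⟨rfl, heq_of_eq (by tauto)⟩
  · rintro ⟨rfl, hb⟩
    exact Or.inr ⟨rfl, by simp [eq_of_heq hb, hx]⟩

theorem reachable_withLeaves_mk_zero (x : Σ i, Fin (m i)) :
    (withLeaves H m).Reachable x ⟨x.1, 0⟩ := by
  by_cases hx : x.2 = 0
  · obtain ⟨i, a⟩ := x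
    obtain rfl : a = 0 := hx
    rfl
  · exact ((withLeaves_adj_of_ne_zero hx).2 rfl).reachable

theorem connected_withLeaves (hH : H.Connected) : (withLeaves H m).Connected := by
  obtain ⟨i⟩ := hH.nonempty
  let center : H →g withLeaves H m := ⟨fun i => ⟨i, 0⟩, withLeaves_adj_mk_zero.2⟩
  refine (connected_iff_exists_forall_reachable _).2 ⟨⟨i, 0⟩, fun x => ?_⟩
  exact ((hH.preconnected i x.1).map center).trans (reachable_withLeaves_mk_zero x).symm

variable {x y : Σ i, Fin (m i)}

theorem rel_withLeaves_of_fst_eq_of_ne_zero (hxy : x.1 = y.1) (hy : y.2 ≠ 0) :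
    Rel (withLeaves H m) x y := by
  have hreach : (withLeaves H m).Reachable x y :=
    (reachable_withLeaves_mk_zero x).trans (hxy ▸ (reachable_withLeaves_mk_zero y).symm)
  by_cases hx : x.2 = 0
  · refine rel_of_forall_adj_eq hreach fun u hu => ?_
    obtain ⟨i, a⟩ := x
    obtain rfl : a = 0 := hx
    rw [(withLeaves_adj_of_ne_zero hy).1 hu, ← hxy]
  · exact rel_of_forall_adj_iff hreach fun u _ _ => by
      rw [withLeaves_adj_of_ne_zero hx, withLeaves_adj_of_ne_zero hy, hxy]

theorem rel_withLeaves_of_fst_eq (hxy : x.1 = y.1) : Rel (withLeaves H m) x y := by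
  by_cases hy : y.2 = 0
  · by_cases hx : x.2 = 0
    · obtain ⟨i, a⟩ := x
      obtain ⟨j, b⟩ := y
      obtain rfl : i = j := hxy
      obtain rfl : a = 0 := hx
      obtain rfl : b = 0 := hy
      exact rel_of_forall_adj_iff (Reachable.refl _) fun _ _ _ => Iff.rfl
    · exact (rel_withLeaves_of_fst_eq_of_ne_zero hxy.symm hx).symm
  · exact rel_withLeaves_of_fst_eq_of_ne_zero hxy hy

theorem exists_withLeaves_adj_ne (hH : HasPrivateNeighbors H) (hxy : x.1 ≠ y.1) :
    ∃ u, (withLeaves H m).Adj y u ∧ u ≠ x := by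
  by_cases hy : y.2 = 0
  · obtain ⟨s, hs, -, hsx⟩ := hH (Ne.symm hxy)
    obtain ⟨j, b⟩ := y
    obtain rfl : b = 0 := hy
    exact ⟨⟨s, 0⟩, withLeaves_adj_mk_zero.2 hs, fun h => hsx (congrArg Sigma.fst h)⟩
  · exact ⟨⟨y.1, 0⟩, (withLeaves_adj_of_ne_zero hy).2 rfl,
      fun h => hxy (congrArg Sigma.fst h).symm⟩

theorem exists_withLeaves_private_neighbor (hH : HasPrivateNeighbors H) (hxy : x.1 ≠ y.1)
    (h : x.2 = 0 ∨ y.2 ≠ 0) :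
    ∃ u, (withLeaves H m).Adj x u ∧ ¬(withLeaves H m).Adj y u ∧ u ≠ y := by
  by_cases hx : x.2 = 0
  · obtain ⟨t, hxt, hyt, hty⟩ := hH hxy
    have hty' : (⟨t, 0⟩ : Σ i, Fin (m i)) ≠ y := fun h => hty (congrArg Sigma.fst h)
    obtain ⟨i, a⟩ := x
    obtain rfl : a = 0 := hx
    refine ⟨⟨t, 0⟩, withLeaves_adj_mk_zero.2 hxt, ?_, hty'⟩
    by_cases hy : y.2 = 0
    · obtain ⟨j, b⟩ := y
      obtain rfl : b = 0 := hy
      rwa [withLeaves_adj_mk_zero]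
    · rw [withLeaves_adj_of_ne_zero hy]
      exact fun h => hty (congrArg Sigma.fst h)
  · have hy := h.resolve_left hx
    refine ⟨⟨x.1, 0⟩, (withLeaves_adj_of_ne_zero hx).2 rfl, ?_,
      fun h => hxy (congrArg Sigma.fst h :)⟩
    rw [withLeaves_adj_of_ne_zero hy]
    exact fun h => hxy (congrArg Sigma.fst h :)

theorem not_rel_withLeaves_of_fst_ne (hH : HasPrivateNeighbors H) (hxy : x.1 ≠ y.1) :
    ¬Rel (withLeaves H m) x y := by
  wlog h : x.2 = 0 ∨ y.2 ≠ 0 generalizing x y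
  · exact fun hr => this (Ne.symm hxy) (by tauto) hr.symm
  obtain ⟨u₁, hxu₁, hyu₁, hu₁⟩ := exists_withLeaves_private_neighbor hH hxy h
  obtain ⟨u₂, hyu₂, hu₂⟩ := exists_withLeaves_adj_ne hH hxy
  exact not_rel_of_private_neighbor hxu₁ hyu₁ hu₁ hyu₂ hu₂

theorem rel_withLeaves_iff (hH : HasPrivateNeighbors H) :
    Rel (withLeaves H m) x y ↔ x.1 = y.1 :=
  ⟨fun h => by_contra fun hxy => not_rel_withLeaves_of_fst_ne hH hxy h,
    rel_withLeaves_of_fst_eq⟩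

end WithLeaves

theorem partition_realizable_general (n k : ℕ) (hk : 5 ≤ k)
    (m : Fin k → ℕ) (hpos : ∀ i, 1 ≤ m i)
    (hsum : ∑ i, m i = n) :
    ∃ G : SimpleGraph (Fin n), G.Connected ∧
      ∃ f : Fin n → Fin k,
        (∀ v w : Fin n, Rel G v w ↔ f v = f w) ∧
        ∀ i : Fin k, Nat.card {v : Fin n // f v = i} = m i := by
  have : ∀ i, NeZero (m i) := fun i => NeZero.of_pos (hpos i)
  let e : (Σ i, Fin (m i)) ≃ Fin n := Fintype.equivFinOfCardEq (by simp [hsum])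
  let φ := Iso.map e (withLeaves (cycleGraph k) m)
  have hcycle : (cycleGraph k).Connected := by
    obtain ⟨k, rfl⟩ : ∃ k', k = k' + 1 := ⟨k - 1, by omega⟩
    exact cycleGraph_connected
  refine ⟨_, φ.connected_iff.1 (connected_withLeaves hcycle), fun v => (e.symm v).1,
    fun v w => ?_, fun i => ?_⟩
  · obtain ⟨x, rfl⟩ := e.surjective v
    obtain ⟨y, rfl⟩ := e.surjective w
    simp only [Equiv.symm_apply_apply]
    exact (rel_iso_iff φ).trans (rel_withLeaves_iff (cycleGraph_hasPrivateNeighbors hk))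
  · rw [Nat.card_congr ((e.symm.subtypeEquiv fun _ => Iff.rfl).trans (Equiv.sigmaSubtype i)),
      Nat.card_fin]

/-- Every non-decreasing integer partition `n₁ ≤ … ≤ n_k` of `n` with at least
five parts is realized as the foliage partition of some graph on `n` vertices. -/
theorem partition_realizable (n k : ℕ) (hk : 5 ≤ k)
    (m : Fin k → ℕ) (hpos : ∀ i, 1 ≤ m i) (hmono : Monotone m)
    (hsum : ∑ i, m i = n) :
    ∃ G : SimpleGraph (Fin n), G.Connected ∧
      ∃ f : Fin n → Fin k,
        (∀ v w : Fin n, Rel G v w ↔ f v = f w) ∧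
        ∀ i : Fin k, Nat.card {v : Fin n // f v = i} = m i :=
  partition_realizable_general n k hk m hpos hsum

end Foliage
end
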